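/- arXiv:2512.12124 — 3 statements merged into one kernel-verified Lean document; each statement's English description precedes it below -/
import Mathlib

section
/- Suppose (b_m)_{m ≥ M} is a sequence of reals in [0,1] with b_M ≤ M^{-7}, where M ≥ L² and M² ≥ 2^{14} for some integer L ≥ 2, and suppose that for all m ≥ M, b_{m+1} ≤ L²(m+1)⁴ b_m² + (m+1)² L³ m^{-a/(10L)} where a > 200L. Then b_m ≤ m^{-7} for all m ≥ M. -/
set_option maxHeartbeats 1000000 in
/-- Inductive bound: if `b_M ≤ M^{-7}` and
`b_{m+1} ≤ L²(m+1)⁴ b_m² + (m+1)² L³ m^{-a/(10L)}` for all `m ≥ M`,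
with `M ≥ L²`, `M² ≥ 2^{14}`, `a > 200L`, then `b_m ≤ m^{-7}` for all `m ≥ M`. -/
theorem stmt_5 (L M : ℕ) (a : ℝ) (hL : 2 ≤ L) (ha : 200 * (L : ℝ) < a)
    (hM1 : L ^ 2 ≤ M) (hM2 : 2 ^ 14 ≤ M ^ 2)
    (b : ℕ → ℝ) (hb0 : ∀ m, 0 ≤ b m) (hb1 : ∀ m, b m ≤ 1)
    (hbM : b M ≤ (M : ℝ) ^ (-(7 : ℤ)))
    (hrec : ∀ m, M ≤ m →
      b (m + 1) ≤ (L : ℝ) ^ 2 * ((m : ℝ) + 1) ^ 4 * b m ^ 2 +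
        ((m : ℝ) + 1) ^ 2 * (L : ℝ) ^ 3 * (m : ℝ) ^ (-(a / (10 * (L : ℝ))))) :
    ∀ m, M ≤ m → b m ≤ (m : ℝ) ^ (-(7 : ℤ)) := by
  have hM128 : 128 ≤ M := by nlinarith
  have hzpow : ∀ y : ℝ, 0 < y → y ^ (-(7 : ℤ)) = (y ^ 7)⁻¹ := by
    intro y hy
    rw [zpow_neg, zpow_ofNat]
  intro m hm
  induction m, hm using Nat.le_induction with
  | base => exact hbM
  | succ n hn ih =>
    set x : ℝ := (n : ℝ) with hxdef
    have hMx : (M : ℝ) ≤ x := by rw [hxdef]; exact_mod_cast hn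
    have hx : (128 : ℝ) ≤ x := by
      have h128 : (128 : ℝ) ≤ (M : ℝ) := by exact_mod_cast hM128
      linarith
    have hx0 : (0 : ℝ) < x := by linarith
    have hx1 : (1 : ℝ) ≤ x := by linarith
    have hL1 : (1 : ℝ) ≤ (L : ℝ) := by exact_mod_cast Nat.one_le_of_lt hL
    have hL2 : (L : ℝ) ^ 2 ≤ x := by
      have h1 : ((L:ℕ)^2 : ℝ) ≤ (M : ℝ) := by exact_mod_cast hM1
      push_cast at h1
      linarith [hMx]
    have hL3 : (L : ℝ) ^ 3 ≤ x ^ 2 := by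
      have : (L : ℝ) ^ 3 ≤ (L : ℝ) ^ 4 := pow_le_pow_right₀ hL1 (by norm_num)
      have h4 : (L : ℝ) ^ 4 = ((L:ℝ)^2)^2 := by ring
      nlinarith [sq_nonneg ((L:ℝ)^2), hL2]
    -- previous-step bound
    have hbn : b n ≤ (x ^ 7)⁻¹ := by rw [← hzpow x hx0]; exact ih
    have hb2 : b n ^ 2 ≤ (x ^ 14)⁻¹ := by
      have := pow_le_pow_left₀ (hb0 n) hbn 2
      calc b n ^ 2 ≤ ((x ^ 7)⁻¹) ^ 2 := this
        _ = (x ^ 14)⁻¹ := by rw [inv_pow, ← pow_mul]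
    -- rpow bound
    have hr : x ^ (-(a / (10 * (L : ℝ)))) ≤ (x ^ 20)⁻¹ := by
      have hLpos : (0 : ℝ) < 10 * (L : ℝ) := by linarith
      have h20 : (-(a / (10 * (L : ℝ)))) ≤ (-20 : ℝ) := by
        have : (20 : ℝ) ≤ a / (10 * (L : ℝ)) := by
          rw [le_div_iff₀ hLpos]; linarith
        linarith
      calc x ^ (-(a / (10 * (L : ℝ)))) ≤ x ^ ((-20 : ℝ)) :=
            Real.rpow_le_rpow_of_exponent_le hx1 h20
        _ = (x ^ 20)⁻¹ := by
            rw [Real.rpow_neg hx0.le, show ((20:ℝ)) = ((20:ℕ):ℝ) by norm_num,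
              Real.rpow_natCast]
    -- polynomial bounds
    have hy : x + 1 ≤ 2 * x := by linarith
    have hy0 : (0:ℝ) ≤ x + 1 := by linarith
    have h11 : (x+1)^11 ≤ 2048 * x^11 := by
      calc (x+1)^11 ≤ (2*x)^11 := pow_le_pow_left₀ hy0 hy 11
        _ = 2048 * x^11 := by ring
    have h9 : (x+1)^9 ≤ 512 * x^9 := by
      calc (x+1)^9 ≤ (2*x)^9 := pow_le_pow_left₀ hy0 hy 9
        _ = 512 * x^9 := by ring
    have b1 : (L:ℝ)^2 * (x+1)^11 ≤ 2048 * x^12 := by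
      calc (L:ℝ)^2 * (x+1)^11 ≤ x * (2048 * x^11) := by
            apply mul_le_mul hL2 h11 (by positivity) (by positivity)
        _ = 2048 * x^12 := by ring
    have b2 : (x+1)^9 * (L:ℝ)^3 ≤ 512 * x^11 := by
      calc (x+1)^9 * (L:ℝ)^3 ≤ (512 * x^9) * x^2 := by
            apply mul_le_mul h9 hL3 (by positivity) (by positivity)
        _ = 512 * x^11 := by ring
    have hx2 : (16384 : ℝ) ≤ x^2 := by nlinarith
    have hmono : x^25 ≤ x^32 := pow_le_pow_right₀ hx1 (by norm_num)
    have key : ((L:ℝ)^2 * (x+1)^4 * x^20 + x^14 * ((x+1)^2 * (L:ℝ)^3)) * (x+1)^7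
        ≤ 1 * (x^14 * x^20) := by
      have e1 : (L:ℝ)^2 * (x+1)^4 * x^20 * (x+1)^7 = ((L:ℝ)^2 * (x+1)^11) * x^20 := by ring
      have e2 : x^14 * ((x+1)^2 * (L:ℝ)^3) * (x+1)^7 = ((x+1)^9 * (L:ℝ)^3) * x^14 := by ring
      have c1 : ((L:ℝ)^2 * (x+1)^11) * x^20 ≤ 2048 * x^32 := by
        calc ((L:ℝ)^2 * (x+1)^11) * x^20 ≤ (2048 * x^12) * x^20 :=
              mul_le_mul_of_nonneg_right b1 (by positivity)
          _ = 2048 * x^32 := by ring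
      have c2 : ((x+1)^9 * (L:ℝ)^3) * x^14 ≤ 512 * x^25 := by
        calc ((x+1)^9 * (L:ℝ)^3) * x^14 ≤ (512 * x^11) * x^14 :=
              mul_le_mul_of_nonneg_right b2 (by positivity)
          _ = 512 * x^25 := by ring
      have c3 : (16384:ℝ) * x^32 ≤ x^32 * x^2 :=
        by nlinarith [pow_nonneg hx0.le 32]
      have hfin : 2048 * x^32 + 512 * x^25 ≤ 1 * (x^14 * x^20) := by
        have : x^14 * x^20 = x^32 * x^2 := by ring
        nlinarith [pow_nonneg hx0.le 32]
      nlinarith [c1, c2]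
    have final : (L:ℝ)^2 * (x+1)^4 * (x^14)⁻¹ + (x+1)^2 * (L:ℝ)^3 * (x^20)⁻¹
        ≤ ((x+1)^7)⁻¹ := by
      rw [← div_eq_mul_inv, ← div_eq_mul_inv, inv_eq_one_div,
        div_add_div _ _ (by positivity : (x^14:ℝ) ≠ 0) (by positivity : (x^20:ℝ) ≠ 0),
        div_le_div_iff₀ (by positivity) (by positivity)]
      exact key
    have hgoal : ((n+1 : ℕ) : ℝ) ^ (-(7 : ℤ)) = ((x+1)^7)⁻¹ := by
      push_cast
      exact hzpow (x+1) (by linarith)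
    rw [hgoal]
    calc b (n+1) ≤ (L:ℝ)^2 * (x+1)^4 * b n ^ 2
          + (x+1)^2 * (L:ℝ)^3 * x ^ (-(a / (10 * (L : ℝ)))) := hrec n hn
      _ ≤ (L:ℝ)^2 * (x+1)^4 * (x^14)⁻¹ + (x+1)^2 * (L:ℝ)^3 * (x^20)⁻¹ := by
          apply add_le_add
          · exact mul_le_mul_of_nonneg_left hb2 (by positivity)
          · exact mul_le_mul_of_nonneg_left hr (by positivity)
      _ ≤ ((x+1)^7)⁻¹ := final
end

section
/- Let Ω be a finite product probability space and let B, C be decreasing events and D an event measurable with respect to a sub-collection F of the coordinates, such that conditionally on F the measure is still a product measure and B, C are decreasing in the remaining coordinates. Then P(D ∩ B ∩ C) ≥ E[1_D · P(B | F) · P(C | F)]. -/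
/-!
Conditioning a product measure on the coordinates in `F` amounts to freezing them: the
conditional expectation of `φ` is `ω ↦ ∫ φ (F.piecewise ω η) dη`, because
`(ω, η) ↦ F.piecewise ω η` pushes the square of the product measure forward to the product
measure itself. For fixed `ω` the functions `η ↦ 1_B (F.piecewise ω η)` and
`η ↦ 1_C (F.piecewise ω η)` are decreasing, so Harris' inequality (FKG for the log-supermodular
product weights) gives `P(B|F) P(C|F) ≤ P(B ∩ C|F)`; multiply by `1_D` and integrate.
-/

open MeasureTheory Set

lemma fkg_of_antitone {α : Type*} [DistribLattice α] [Fintype α] {w f g : α → ℝ}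
    (hw₀ : 0 ≤ w) (hf₀ : 0 ≤ f) (hg₀ : 0 ≤ g) (hf : Antitone f) (hg : Antitone g)
    (hw : ∀ a b, w a * w b ≤ w (a ⊓ b) * w (a ⊔ b)) :
    (∑ a, w a * f a) * ∑ a, w a * g a ≤ (∑ a, w a) * ∑ a, w a * (f a * g a) :=
  fkg (α := αᵒᵈ) f g w hw₀ hf₀ hg₀ hf.dual_left hg.dual_left fun a b =>
    (hw a b).trans_eq (mul_comm _ _)

lemma prod_mul_prod_le_prod_inf_mul_prod_sup {ι β : Type*} [Fintype ι] [LinearOrder β]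
    (φ : ι → β → ℝ) (a b : ι → β) :
    (∏ i, φ i (a i)) * ∏ i, φ i (b i) ≤ (∏ i, φ i ((a ⊓ b) i)) * ∏ i, φ i ((a ⊔ b) i) := by
  simp only [← Finset.prod_mul_distrib, Pi.inf_apply, Pi.sup_apply]
  refine le_of_eq (Finset.prod_congr rfl fun i _ => ?_)
  rcases le_total (a i) (b i) with h | h
  · rw [inf_eq_left.mpr h, sup_eq_right.mpr h]
  · rw [inf_eq_right.mpr h, sup_eq_left.mpr h, mul_comm]

lemma IsLowerSet.antitone_indicator_one {β : Type*} [Preorder β] {E : Set β}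
    (hE : IsLowerSet E) : Antitone (E.indicator fun _ => (1 : ℝ)) := fun a b hab => by
  by_cases hb : b ∈ E
  · simp [hb, hE hab hb]
  · simp [hb, indicator_nonneg]

lemma Set.monotone_piecewise_right {ι : Type*} {α : ι → Type*} [∀ i, Preorder (α i)]
    (s : Set ι) [DecidablePred (· ∈ s)] (f : ∀ i, α i) : Monotone fun g => s.piecewise f g :=
  fun _ _ h => piecewise_mono (fun _ _ => le_rfl) fun i _ => h i

section Piecewise

variable {ι : Type*} [Fintype ι] {α : ι → Type*} [∀ i, MeasurableSpace (α i)]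
  (μ : ∀ i, Measure (α i)) [∀ i, IsProbabilityMeasure (μ i)] (s : Set ι) [DecidablePred (· ∈ s)]

lemma measurePreserving_piecewise :
    MeasurePreserving (fun p : (∀ i, α i) × (∀ i, α i) => s.piecewise p.1 p.2)
      ((Measure.pi μ).prod (Measure.pi μ)) (Measure.pi μ) := by
  have hmeas : Measurable (fun p : (∀ i, α i) × (∀ i, α i) => s.piecewise p.1 p.2) :=
    measurable_pi_lambda _ fun i => by
      by_cases hi : i ∈ s <;> simp only [Set.piecewise, hi, if_true, if_false] <;> fun_prop
  refine ⟨hmeas, (Measure.pi_eq fun t ht => ?_).symm⟩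
  have hpre : (fun p : (∀ i, α i) × (∀ i, α i) => s.piecewise p.1 p.2) ⁻¹' univ.pi t =
      univ.pi (s.piecewise t fun _ => univ) ×ˢ univ.pi (s.piecewise (fun _ => univ) t) := by
    ext p
    simp only [mem_preimage, mem_univ_pi, mem_prod, Set.piecewise, ← forall_and]
    exact forall_congr' fun i => by by_cases hi : i ∈ s <;> simp [hi]
  rw [Measure.map_apply hmeas (MeasurableSet.univ_pi ht), hpre, Measure.prod_prod,
    Measure.pi_pi, Measure.pi_pi, ← Finset.prod_mul_distrib]
  refine Finset.prod_congr rfl fun i _ => ?_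
  by_cases hi : i ∈ s <;> simp [hi]

lemma integral_integral_piecewise {φ : (∀ i, α i) → ℝ} (hφ : Integrable φ (Measure.pi μ)) :
    ∫ ω, ∫ η, φ (s.piecewise ω η) ∂Measure.pi μ ∂Measure.pi μ = ∫ ω, φ ω ∂Measure.pi μ := by
  have h := measurePreserving_piecewise μ s
  have hφ' : AEStronglyMeasurable φ (Measure.map _ _) := h.map_eq ▸ hφ.aestronglyMeasurable
  calc _ = ∫ p, φ (s.piecewise p.1 p.2) ∂(Measure.pi μ).prod (Measure.pi μ) :=
        (integral_prod _ ((h.integrable_comp hφ.aestronglyMeasurable).mpr hφ)).symm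
    _ = ∫ ω, φ ω ∂Measure.map _ ((Measure.pi μ).prod (Measure.pi μ)) :=
        (integral_map h.measurable.aemeasurable hφ').symm
    _ = _ := by rw [h.map_eq]

end Piecewise

section FiniteProduct

variable {ι α : Type*} [Fintype ι] [MeasurableSpace α] [DiscreteMeasurableSpace α]
  (μ : ι → Measure α) [∀ i, IsProbabilityMeasure (μ i)]

lemma integral_mul_integral_le_integral_mul_of_antitone [Fintype α] [LinearOrder α]
    {f g : (ι → α) → ℝ} (hf₀ : 0 ≤ f) (hg₀ : 0 ≤ g) (hf : Antitone f) (hg : Antitone g) :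
    (∫ ω, f ω ∂Measure.pi μ) * ∫ ω, g ω ∂Measure.pi μ ≤ ∫ ω, f ω * g ω ∂Measure.pi μ := by
  classical
  have hweight : ∀ ω, (Measure.pi μ).real {ω} = ∏ i, (μ i).real {ω i} := fun ω => by
    simp [measureReal_def, ENNReal.toReal_prod]
  have hsum : ∑ ω, (Measure.pi μ).real {ω} = 1 := by simp
  simp only [integral_fintype Integrable.of_finite, smul_eq_mul]
  have h := fkg_of_antitone (w := fun ω => (Measure.pi μ).real {ω}) (fun _ => measureReal_nonneg)
    hf₀ hg₀ hf hg fun a b => by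
      simpa only [hweight] using
        prod_mul_prod_le_prod_inf_mul_prod_sup (fun i x => (μ i).real {x}) a b
  rwa [hsum, one_mul] at h

lemma integral_indicator_piecewise_mul_le [Fintype α] [LinearOrder α] (s : Set ι)
    [DecidablePred (· ∈ s)] {B C : Set (ι → α)} (hB : IsLowerSet B) (hC : IsLowerSet C)
    (ω : ι → α) :
    (∫ η, B.indicator (fun _ => (1 : ℝ)) (s.piecewise ω η) ∂Measure.pi μ) *
        ∫ η, C.indicator (fun _ => (1 : ℝ)) (s.piecewise ω η) ∂Measure.pi μ ≤
      ∫ η, (B ∩ C).indicator (fun _ => (1 : ℝ)) (s.piecewise ω η) ∂Measure.pi μ := by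
  have hBC : (B ∩ C).indicator (fun _ => (1 : ℝ)) =
      fun x => B.indicator (fun _ => 1) x * C.indicator (fun _ => 1) x :=
    inter_indicator_one
  simpa only [hBC] using integral_mul_integral_le_integral_mul_of_antitone μ
    (f := fun η => B.indicator (fun _ => 1) (s.piecewise ω η))
    (g := fun η => C.indicator (fun _ => 1) (s.piecewise ω η))
    (indicator_nonneg fun _ _ => zero_le_one) (indicator_nonneg fun _ _ => zero_le_one)
    (hB.antitone_indicator_one.comp_monotone (s.monotone_piecewise_right ω))
    (hC.antitone_indicator_one.comp_monotone (s.monotone_piecewise_right ω))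

lemma condExp_comap_domRestrict_ae_eq [Finite α] (s : Set ι) [DecidablePred (· ∈ s)]
    (φ : (ι → α) → ℝ) :
    (Measure.pi μ)[φ | MeasurableSpace.comap (fun ω (i : s) => ω i) inferInstance]
      =ᵐ[Measure.pi μ] fun ω => ∫ η, φ (s.piecewise ω η) ∂Measure.pi μ := by
  set c : (ι → α) → ℝ := fun ω => ∫ η, φ (s.piecewise ω η) ∂Measure.pi μ
  have hc : c = Function.extend s.domRestrict c 0 ∘ s.domRestrict := by
    refine (Function.FactorsThrough.extend_comp _ fun ω ω' h => ?_).symm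
    have hpw : ∀ η, s.piecewise ω η = s.piecewise ω' η := fun η => funext fun i => by
      by_cases hi : i ∈ s
      · simpa [hi] using congrFun h ⟨i, hi⟩
      · simp [hi]
    simp only [c, hpw]
  refine (ae_eq_condExp_of_forall_setIntegral_eq (fun _ _ => .of_discrete) .of_finite
    (fun _ _ _ => Integrable.of_finite.integrableOn) (fun t ht _ => ?_) ?_).symm
  · have hmem : ∀ ω η, s.piecewise ω η ∈ t ↔ ω ∈ t := by
      obtain ⟨u, -, rfl⟩ := ht
      simp
    -- membership in `t` only depends on the frozen coordinates, so `1_t` moves inside `∫ dη`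
    have hind : t.indicator c =
        fun ω => ∫ η, t.indicator φ (s.piecewise ω η) ∂Measure.pi μ := by
      ext ω
      by_cases hω : ω ∈ t <;> simp [indicator, hmem, hω, c]
    rw [← integral_indicator .of_discrete, ← integral_indicator .of_discrete, hind,
      integral_integral_piecewise _ _ .of_finite]
  · rw [hc]
    exact (Measurable.of_discrete.comp (comap_measurable _)).stronglyMeasurable.aestronglyMeasurable

end FiniteProduct

lemma integral_indicator_mul_condExp_indicator {Ω : Type*} {m m₀ : MeasurableSpace Ω}
    {μ : Measure Ω} [IsFiniteMeasure μ] (hm : m ≤ m₀) {D E : Set Ω} (hD : MeasurableSet[m] D)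
    (hE : MeasurableSet[m₀] E) :
    ∫ ω, D.indicator (fun _ => 1) ω * μ[E.indicator (fun _ => 1) | m] ω ∂μ = μ.real (D ∩ E) := by
  have hmul : ∀ (f : Ω → ℝ) ω, D.indicator (fun _ => 1) ω * f ω = D.indicator f ω :=
    fun f ω => by by_cases h : ω ∈ D <;> simp [h]
  simp_rw [hmul]
  rw [integral_indicator (hm _ hD), setIntegral_condExp hm ((integrable_const 1).indicator hE) hD,
    ← integral_indicator (hm _ hD), indicator_indicator,
    ← integral_indicator_one ((hm _ hD).inter hE)]
  rfl

theorem stmt_13_general {ι : Type*} [Fintype ι] (μ : ι → Measure Bool)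
    [∀ i, IsProbabilityMeasure (μ i)] (F : Set ι)
    (mF : MeasurableSpace (ι → Bool))
    (hmF : mF = MeasurableSpace.comap
      (fun (ω : ι → Bool) (i : F) => ω (i : ι))
      (inferInstance : MeasurableSpace (F → Bool)))
    (B C D : Set (ι → Bool))
    (hD : MeasurableSet[mF] D)
    (hBdec : ∀ ω ω' : ι → Bool, ω ≤ ω' → ω' ∈ B → ω ∈ B)
    (hCdec : ∀ ω ω' : ι → Bool, ω ≤ ω' → ω' ∈ C → ω ∈ C) :
    ∫ ω, Set.indicator D (fun _ => (1 : ℝ)) ω *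
        MeasureTheory.condExp mF (Measure.pi μ) (Set.indicator B (fun _ => (1 : ℝ))) ω *
        MeasureTheory.condExp mF (Measure.pi μ) (Set.indicator C (fun _ => (1 : ℝ))) ω
        ∂(Measure.pi μ)
      ≤ ((Measure.pi μ) (D ∩ B ∩ C)).toReal := by
  classical
  subst hmF
  set π := Measure.pi μ
  let c : Set (ι → Bool) → (ι → Bool) → ℝ := fun E ω =>
    ∫ η, E.indicator (fun _ => 1) (F.piecewise ω η) ∂π
  have hcond : ∀ E : Set (ι → Bool), π[E.indicator (fun _ => 1) | _] =ᵐ[π] c E :=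
    fun E => condExp_comap_domRestrict_ae_eq μ F _
  calc _ = ∫ ω, D.indicator (fun _ => 1) ω * (c B ω * c C ω) ∂π :=
        integral_congr_ae <| by
          filter_upwards [hcond B, hcond C] with ω hωB hωC
          rw [hωB, hωC, mul_assoc]
    _ ≤ ∫ ω, D.indicator (fun _ => 1) ω * c (B ∩ C) ω ∂π :=
        integral_mono .of_finite .of_finite fun ω => mul_le_mul_of_nonneg_left
          (integral_indicator_piecewise_mul_le μ F (fun _ _ h => hBdec _ _ h)
            (fun _ _ h => hCdec _ _ h) ω)
          (indicator_nonneg (fun _ _ => zero_le_one) ω)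
    _ = ∫ ω, D.indicator (fun _ => 1) ω * π[(B ∩ C).indicator (fun _ => 1) | _] ω ∂π :=
        integral_congr_ae <| by
          filter_upwards [hcond (B ∩ C)] with ω hω
          rw [hω]
    _ = π.real (D ∩ B ∩ C) := by
        rw [inter_assoc]
        exact integral_indicator_mul_condExp_indicator (fun _ _ => .of_discrete) hD .of_discrete

/-- Conditional Harris–FKG: on a finite product probability space, for decreasing events
`B`, `C` and an event `D` measurable with respect to the coordinates in `F`,
`P(D ∩ B ∩ C) ≥ E[1_D · P(B|F) · P(C|F)]`. -/
theorem stmt_13 {ι : Type*} [Fintype ι] (μ : ι → Measure Bool)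
    [∀ i, IsProbabilityMeasure (μ i)] (F : Set ι)
    (mF : MeasurableSpace (ι → Bool))
    (hmF : mF = MeasurableSpace.comap
      (fun (ω : ι → Bool) (i : F) => ω (i : ι))
      (inferInstance : MeasurableSpace (F → Bool)))
    (B C D : Set (ι → Bool)) (hB : MeasurableSet B) (hC : MeasurableSet C)
    (hD : MeasurableSet[mF] D)
    (hBdec : ∀ ω ω' : ι → Bool, ω ≤ ω' → ω' ∈ B → ω ∈ B)
    (hCdec : ∀ ω ω' : ι → Bool, ω ≤ ω' → ω' ∈ C → ω ∈ C) :
    ∫ ω, Set.indicator D (fun _ => (1 : ℝ)) ω *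
        MeasureTheory.condExp mF (Measure.pi μ) (Set.indicator B (fun _ => (1 : ℝ))) ω *
        MeasureTheory.condExp mF (Measure.pi μ) (Set.indicator C (fun _ => (1 : ℝ))) ω
        ∂(Measure.pi μ)
      ≤ ((Measure.pi μ) (D ∩ B ∩ C)).toReal :=
  stmt_13_general μ F mF hmF B C D hD hBdec hCdec
end

section
/- Let L ≥ 2, n ≥ 1, k ≥ 1, and consider the hierarchical lattice H_L with blocks. Suppose Λ_{n+k} is partitioned into L^k many n-blocks and we form a graph G on these n-blocks where (deterministically) each n-block has been assigned a cluster of density at least θ ∈ (0,1], with at most one bad block; assume moreover all 'nice' conditions of Claim niceness hold: every (n+j)-block (j = 1,…,k) is nice, meaning any two of its L children sub-blocks each containing a cluster of density ≥ 0.4 have their largest clusters linked. If θ·(1 − 1/L) ≥ 0.4 and θ ≥ 0.9, then Λ_{n+k} contains a connected cluster of size at least (1 − L^{−k})·θ·L^{n+k}, in particular of density at least θ − L^{−k}. -/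
/-- Reachability inside a set `S` along open edges of `G`. -/
def reachIn (G : SimpleGraph ℕ) (S : Set ℕ) : ℕ → ℕ → Prop :=
  Relation.ReflTransGen (fun a b => a ∈ S ∧ b ∈ S ∧ G.Adj a b)

/-- The open cluster of `x` inside the set `S`. -/
def clusterIn (G : SimpleGraph ℕ) (S : Set ℕ) (x : ℕ) : Set ℕ :=
  {y ∈ S | reachIn G S x y}

/-- The `b`-th block of level `n + j` in the hierarchical lattice of side length `L`
(vertices `[b·L^{n+j}, (b+1)·L^{n+j})`). -/
def hblock (L n j b : ℕ) : Set ℕ :=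
  Set.Ico (b * L ^ (n + j)) ((b + 1) * L ^ (n + j))

/-!
Induction on the level `j`: every `(n+j)`-block has a largest cluster of size at least
`θ L^{n+j}`, except the ancestor of the bad `n`-block, whose largest cluster has size at least
`θ L^{n+j} - θ L^n = (1 - L^{-j}) θ L^{n+j}`. For `j ≥ 1` both bounds exceed `0.4 L^{n+j}`
because `θ (1 - 1/L) ≥ 0.4`, so niceness links the largest clusters of all `L` children of a
block into one cluster of the parent, whose size is at least the sum of theirs. At `j = 0` the
bad child may be too small to be linked; it is left out, which costs exactly its share `θ L^n`.
-/

open Finset Function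

lemma reachIn_mono {G : SimpleGraph ℕ} {S T : Set ℕ} (h : S ⊆ T) {x y : ℕ}
    (hxy : reachIn G S x y) : reachIn G T x y :=
  Relation.ReflTransGen.mono (fun _ _ hab => ⟨h hab.1, h hab.2.1, hab.2.2⟩) x y hxy

lemma reachIn_symm {G : SimpleGraph ℕ} {S : Set ℕ} {x y : ℕ}
    (h : reachIn G S x y) : reachIn G S y x := by
  induction h with
  | refl => exact .refl
  | tail _ hbc ih => exact .head ⟨hbc.2.1, hbc.1, hbc.2.2.symm⟩ ih

lemma clusterIn_subset (G : SimpleGraph ℕ) (S : Set ℕ) (x : ℕ) : clusterIn G S x ⊆ S :=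
  fun _ hy => hy.1

section clusterIn

variable {G : SimpleGraph ℕ} {S T : Set ℕ} {x y : ℕ}

lemma clusterIn_mono (h : S ⊆ T) : clusterIn G S x ⊆ clusterIn G T x :=
  fun _ hy => ⟨h hy.1, reachIn_mono h hy.2⟩

lemma clusterIn_subset_of_mem (hy : y ∈ clusterIn G S x) : clusterIn G S y ⊆ clusterIn G S x :=
  fun _ hz => ⟨hz.1, hy.2.trans hz.2⟩

lemma clusterIn_eq_of_mem (hy : y ∈ clusterIn G S x) : clusterIn G S y = clusterIn G S x :=
  (clusterIn_subset_of_mem hy).antisymm fun _ hz => ⟨hz.1, (reachIn_symm hy.2).trans hz.2⟩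

lemma mem_clusterIn_of_adj {p q : ℕ} (hp : p ∈ clusterIn G S x) (hq : q ∈ S) (hpq : G.Adj p q) :
    q ∈ clusterIn G S x :=
  ⟨hq, hp.2.tail ⟨hp.1, hq, hpq⟩⟩

lemma clusterIn_subset_of_adj {z p q : ℕ} (hST : S ⊆ T) (hp : p ∈ clusterIn G T z)
    (hq : q ∈ clusterIn G S x) (hpq : G.Adj p q) : clusterIn G S x ⊆ clusterIn G T z := by
  rw [← clusterIn_eq_of_mem hq]
  exact (clusterIn_mono hST).trans
    (clusterIn_subset_of_mem (mem_clusterIn_of_adj hp (hST hq.1) hpq))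

theorem sum_ncard_le_of_linked {ι : Type*} (hT : T.Finite) {m : ℕ}
    (hm : ∀ z ∈ T, (clusterIn G T z).ncard ≤ m) {I : Finset ι} {S K : ι → Set ℕ}
    (hST : ∀ i ∈ I, S i ⊆ T) (hS : (I : Set ι).PairwiseDisjoint S)
    (hK : ∀ i ∈ I, ∃ x ∈ S i, K i = clusterIn G (S i) x)
    (hlink : ∀ i ∈ I, ∀ i' ∈ I, i ≠ i' → ∃ p ∈ K i, ∃ q ∈ K i', G.Adj p q) :
    ∑ i ∈ I, (K i).ncard ≤ m := by
  rcases I.eq_empty_or_nonempty with rfl | ⟨i₀, hi₀⟩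
  · simp
  obtain ⟨x₀, hx₀, hK₀⟩ := hK i₀ hi₀
  have hKsub : ∀ i ∈ I, K i ⊆ clusterIn G T x₀ := by
    intro i hi
    by_cases h : i = i₀
    · subst h
      exact hK₀ ▸ clusterIn_mono (hST i hi)
    obtain ⟨p, hp, q, hq, hpq⟩ := hlink i₀ hi₀ i hi (Ne.symm h)
    obtain ⟨x, -, hKi⟩ := hK i hi
    rw [hK₀] at hp
    rw [hKi] at hq ⊢
    exact clusterIn_subset_of_adj (hST i hi) (clusterIn_mono (hST i₀ hi₀) hp) hq hpq
  have hKS : ∀ i ∈ I, K i ⊆ S i := fun i hi => by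
    obtain ⟨x, -, hKi⟩ := hK i hi
    exact hKi ▸ clusterIn_subset G (S i) x
  have hCfin : (clusterIn G T x₀).Finite := hT.subset (clusterIn_subset G T x₀)
  calc ∑ i ∈ I, (K i).ncard = (⋃ i ∈ (I : Set ι), K i).ncard := by
        rw [Set.Finite.ncard_biUnion I.finite_toSet
          (fun i hi => hCfin.subset (hKsub i hi)) (hS.mono_on hKS), finsum_mem_coe_finset]
    _ ≤ (clusterIn G T x₀).ncard := Set.ncard_le_ncard (Set.iUnion₂_subset hKsub) hCfin
    _ ≤ m := hm x₀ (hST i₀ hi₀ hx₀)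

end clusterIn

lemma hblock_finite (L n j b : ℕ) : (hblock L n j b).Finite := Set.finite_Ico _ _

lemma hblock_mul_add_subset {L n j u i : ℕ} (hi : i < L) :
    hblock L n j (u * L + i) ⊆ hblock L n (j + 1) u := by
  intro x hx
  simp only [hblock, Set.mem_Ico, ← add_assoc, pow_succ] at hx ⊢
  constructor <;> nlinarith

lemma hblock_pairwise_disjoint (L n j : ℕ) : Pairwise (Disjoint on hblock L n j) := by
  refine (pairwise_disjoint_on _).2 fun b b' hbb' => Set.disjoint_left.2 fun x hx hx' => ?_
  simp only [hblock, Set.mem_Ico] at hx hx'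
  nlinarith [Nat.mul_le_mul_right (L ^ (n + j)) (Nat.succ_le_of_lt hbb')]

lemma mul_add_lt_pow_succ {L m u i : ℕ} (hu : u < L ^ m) (hi : i < L) :
    u * L + i < L ^ (m + 1) := by
  rw [pow_succ]; nlinarith

lemma sum_range_ite_mul_add_eq {M : Type*} [AddCommMonoid M] {L : ℕ} (hL : 0 < L) (u c : ℕ)
    (D : M) : ∑ i ∈ range L, (if u * L + i = c then D else 0) = if u = c / L then D else 0 := by
  have key : ∀ i < L, (u * L + i = c ↔ u = c / L ∧ i = c % L) := by
    intro i hi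
    constructor
    · rintro rfl
      rw [mul_comm, Nat.mul_add_div hL, Nat.mul_add_mod, Nat.div_eq_of_lt hi, Nat.mod_eq_of_lt hi]
      simp
    · rintro ⟨rfl, rfl⟩
      exact Nat.div_add_mod' c L
  rw [sum_congr rfl fun i hi => if_congr (key i (mem_range.1 hi)) rfl rfl]
  split_ifs with h <;> simp [h, Nat.mod_lt c hL]

lemma sum_le_sum_filter_pos {ι M : Type*} [AddCommMonoid M] [LinearOrder M]
    [IsOrderedAddMonoid M] (s : Finset ι) (f : ι → M) :
    ∑ i ∈ s, f i ≤ ∑ i ∈ s with 0 < f i, f i := by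
  rw [← sum_filter_add_sum_filter_not s (0 < f ·)]
  exact add_le_of_nonpos_right (sum_nonpos fun i hi => not_lt.1 (mem_filter.1 hi).2)

lemma le_of_le_mul_one_sub_inv {x θ a : ℝ} (hx : 1 ≤ x) (ha : 0 < a)
    (h : a ≤ θ * (1 - 1 / x)) : a ≤ θ := by
  have h0 : 0 ≤ 1 - 1 / x := sub_nonneg.2 (div_le_one_of_le₀ hx (by linarith))
  have h1 : 1 - 1 / x ≤ 1 := sub_le_self _ (by positivity)
  rcases le_or_gt 0 θ with hθ | hθ <;> nlinarith

/-- `c` is the index of the `(n+j)`-block containing the bad `n`-block. -/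
def clusterBound (θ : ℝ) (L n j c b : ℕ) : ℝ :=
  θ * L ^ (n + j) - if b = c then θ * L ^ n else 0

lemma clusterBound_nonpos_or_le {θ a : ℝ} {L : ℕ} (hL : 1 ≤ L) (ha : 0 < a)
    (hθ : a ≤ θ * (1 - 1 / L)) (n j c b : ℕ) :
    clusterBound θ L n j c b ≤ 0 ∨ a * L ^ (n + j) ≤ clusterBound θ L n j c b := by
  have hx : (1 : ℝ) ≤ L := by exact_mod_cast hL
  have haθ : a ≤ θ := le_of_le_mul_one_sub_inv hx ha hθ
  unfold clusterBound
  split_ifs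
  · rcases Nat.eq_zero_or_pos j with rfl | hj
    · simp
    right
    have hpow : (L : ℝ) ^ n ≤ L ^ (n + j) / L := by
      rw [le_div_iff₀ (by positivity), ← pow_succ]
      exact pow_le_pow_right₀ hx (by omega)
    calc a * L ^ (n + j) ≤ θ * (1 - 1 / L) * L ^ (n + j) := by gcongr
      _ = θ * L ^ (n + j) - θ * (L ^ (n + j) / L) := by ring
      _ ≤ θ * L ^ (n + j) - θ * L ^ n := by gcongr; linarith
  · right
    rw [sub_zero]
    gcongr

lemma sub_le_clusterBound {θ : ℝ} (hθ : 0 ≤ θ) (L n j c b : ℕ) :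
    θ * L ^ (n + j) - θ * L ^ n ≤ clusterBound θ L n j c b := by
  unfold clusterBound
  split_ifs
  · rfl
  · linarith [show 0 ≤ θ * (L : ℝ) ^ n by positivity]

lemma sum_clusterBound_mul_add {θ : ℝ} {L : ℕ} (hL : 0 < L) (n j c u : ℕ) :
    ∑ i ∈ range L, clusterBound θ L n j c (u * L + i) = clusterBound θ L n (j + 1) (c / L) u := by
  simp only [clusterBound, sum_sub_distrib, sum_const, card_range, nsmul_eq_mul,
    sum_range_ite_mul_add_eq hL]
  ring

theorem clusterBound_le_ncard {L n k : ℕ} (hL : 0 < L) {θ : ℝ}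
    (hθL : 0.4 ≤ θ * (1 - 1 / (L : ℝ))) {G : SimpleGraph ℕ} {Kmax : ℕ → ℕ → Set ℕ}
    (hKcluster : ∀ j b, j ≤ k → b < L ^ (k - j) →
      ∃ x ∈ hblock L n j b, Kmax j b = clusterIn G (hblock L n j b) x)
    (hKmaximal : ∀ j b, j ≤ k → b < L ^ (k - j) →
      ∀ x ∈ hblock L n j b,
        (clusterIn G (hblock L n j b) x).ncard ≤ (Kmax j b).ncard)
    (hnice : ∀ j u, 1 ≤ j → j ≤ k → u < L ^ (k - j) →
      ∀ i i' : ℕ, i < L → i' < L → i ≠ i' →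
        0.4 * (L : ℝ) ^ (n + j - 1) ≤ ((Kmax (j - 1) (u * L + i)).ncard : ℝ) →
        0.4 * (L : ℝ) ^ (n + j - 1) ≤ ((Kmax (j - 1) (u * L + i')).ncard : ℝ) →
        ∃ x ∈ Kmax (j - 1) (u * L + i), ∃ y ∈ Kmax (j - 1) (u * L + i'), G.Adj x y)
    {b₀ : ℕ} (hgood : ∀ b, b < L ^ k → b ≠ b₀ → θ * (L : ℝ) ^ n ≤ ((Kmax 0 b).ncard : ℝ)) :
    ∀ j ≤ k, ∀ b < L ^ (k - j), clusterBound θ L n j (b₀ / L ^ j) b ≤ (Kmax j b).ncard := by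
  intro j
  induction j with
  | zero =>
    intro _ b hb
    simp only [clusterBound, pow_zero, Nat.div_one, add_zero]
    split_ifs with h
    · simp
    · simpa using hgood b (by simpa using hb) h
  | succ j ih =>
    intro hj u hu
    have hchild : ∀ i < L, u * L + i < L ^ (k - j) := fun i hi => by
      simpa [show k - (j + 1) + 1 = k - j by omega] using mul_add_lt_pow_succ hu hi
    set ℓ := fun i => clusterBound θ L n j (b₀ / L ^ j) (u * L + i)
    set I := (range L).filter (fun i => 0 < ℓ i)
    have hIL : ∀ i ∈ I, i < L := fun i hi => mem_range.1 (mem_filter.1 hi).1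
    have hℓ : ∀ i < L, ℓ i ≤ (Kmax j (u * L + i)).ncard :=
      fun i hi => ih (by omega) _ (hchild i hi)
    have hbig : ∀ i ∈ I, 0.4 * (L : ℝ) ^ (n + j) ≤ (Kmax j (u * L + i)).ncard := fun i hi =>
      ((clusterBound_nonpos_or_le hL (by norm_num) hθL n j _ _).resolve_left
        (not_le.2 (mem_filter.1 hi).2)).trans (hℓ i (hIL i hi))
    have hmerge : ∑ i ∈ I, (Kmax j (u * L + i)).ncard ≤ (Kmax (j + 1) u).ncard := by
      refine sum_ncard_le_of_linked (hblock_finite L n (j + 1) u) (hKmaximal (j + 1) u hj hu)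
        (S := fun i => hblock L n j (u * L + i)) (fun i hi => hblock_mul_add_subset (hIL i hi))
        (fun i _ i' _ hii' => hblock_pairwise_disjoint L n j (by omega))
        (fun i hi => hKcluster j _ (by omega) (hchild i (hIL i hi))) ?_
      intro i hi i' hi' hii'
      simpa using hnice (j + 1) u (by omega) hj hu i i' (hIL i hi) (hIL i' hi') hii'
        (by simpa using hbig i hi) (by simpa using hbig i' hi')
    calc clusterBound θ L n (j + 1) (b₀ / L ^ (j + 1)) u = ∑ i ∈ range L, ℓ i := by
          rw [pow_succ, ← Nat.div_div_eq_div_mul, sum_clusterBound_mul_add hL]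
      _ ≤ ∑ i ∈ I, ℓ i := sum_le_sum_filter_pos _ _
      _ ≤ ∑ i ∈ I, ((Kmax j (u * L + i)).ncard : ℝ) := sum_le_sum fun i hi => hℓ i (hIL i hi)
      _ ≤ (Kmax (j + 1) u).ncard := by exact_mod_cast hmerge

theorem stmt_19_general (L n k : ℕ) (hL : 2 ≤ L)
    (θ : ℝ) (hθL : 0.4 ≤ θ * (1 - 1 / (L : ℝ)))
    (G : SimpleGraph ℕ)
    (Kmax : ℕ → ℕ → Set ℕ)
    (hKcluster : ∀ j b, j ≤ k → b < L ^ (k - j) →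
      ∃ x ∈ hblock L n j b, Kmax j b = clusterIn G (hblock L n j b) x)
    (hKmaximal : ∀ j b, j ≤ k → b < L ^ (k - j) →
      ∀ x ∈ hblock L n j b,
        (clusterIn G (hblock L n j b) x).ncard ≤ (Kmax j b).ncard)
    (hgood : ∃ b₀ : ℕ, ∀ b : ℕ, b < L ^ k → b ≠ b₀ →
      θ * (L : ℝ) ^ n ≤ ((Kmax 0 b).ncard : ℝ))
    (hnice : ∀ j u, 1 ≤ j → j ≤ k → u < L ^ (k - j) →
      ∀ i i' : ℕ, i < L → i' < L → i ≠ i' →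
        0.4 * (L : ℝ) ^ (n + j - 1) ≤ ((Kmax (j - 1) (u * L + i)).ncard : ℝ) →
        0.4 * (L : ℝ) ^ (n + j - 1) ≤ ((Kmax (j - 1) (u * L + i')).ncard : ℝ) →
        ∃ x ∈ Kmax (j - 1) (u * L + i), ∃ y ∈ Kmax (j - 1) (u * L + i'), G.Adj x y) :
    ∃ x ∈ hblock L n k 0,
      (1 - (L : ℝ) ^ (-(k : ℤ))) * θ * (L : ℝ) ^ (n + k) ≤
        ((clusterIn G (hblock L n k 0) x).ncard : ℝ) := by
  obtain ⟨b₀, hb₀⟩ := hgood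
  have h0 : 0 < L ^ (k - k) := by simp
  obtain ⟨x, hx, hKx⟩ := hKcluster k 0 le_rfl h0
  have hθ : 0 ≤ θ := le_trans (by norm_num)
    (le_of_le_mul_one_sub_inv (by exact_mod_cast (by omega : 1 ≤ L)) (by norm_num) hθL)
  refine ⟨x, hx, ?_⟩
  calc (1 - (L : ℝ) ^ (-(k : ℤ))) * θ * (L : ℝ) ^ (n + k) = θ * L ^ (n + k) - θ * L ^ n := by
        rw [zpow_neg, zpow_natCast, pow_add]
        field_simp
    _ ≤ clusterBound θ L n k (b₀ / L ^ k) 0 := sub_le_clusterBound hθ _ _ _ _ _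
    _ ≤ (Kmax k 0).ncard :=
        clusterBound_le_ncard (by omega) hθL hKcluster hKmaximal hnice hb₀ k le_rfl 0 h0
    _ = (clusterIn G (hblock L n k 0) x).ncard := by rw [hKx]

/-- Claim niceness: if each `n`-block of `Λ_{n+k}` except possibly one carries a largest
cluster of density at least `θ`, and every block at level `n+j` (`j = 1,…,k`) is nice —
any two children sub-blocks whose largest clusters have density `≥ 0.4` have those
largest clusters joined by an open edge — and `θ·(1 - 1/L) ≥ 0.4`, `θ ≥ 0.9`, then
`Λ_{n+k}` contains a cluster of size at least `(1 - L^{-k})·θ·L^{n+k}`. -/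
theorem stmt_19 (L n k : ℕ) (hL : 2 ≤ L) (hn : 1 ≤ n) (hk : 1 ≤ k)
    (θ : ℝ) (hθ1 : 0.9 ≤ θ) (hθ2 : θ ≤ 1) (hθL : 0.4 ≤ θ * (1 - 1 / (L : ℝ)))
    (G : SimpleGraph ℕ)
    (Kmax : ℕ → ℕ → Set ℕ)
    (hKcluster : ∀ j b, j ≤ k → b < L ^ (k - j) →
      ∃ x ∈ hblock L n j b, Kmax j b = clusterIn G (hblock L n j b) x)
    (hKmaximal : ∀ j b, j ≤ k → b < L ^ (k - j) →
      ∀ x ∈ hblock L n j b,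
        (clusterIn G (hblock L n j b) x).ncard ≤ (Kmax j b).ncard)
    (hgood : ∃ b₀ : ℕ, ∀ b : ℕ, b < L ^ k → b ≠ b₀ →
      θ * (L : ℝ) ^ n ≤ ((Kmax 0 b).ncard : ℝ))
    (hnice : ∀ j u, 1 ≤ j → j ≤ k → u < L ^ (k - j) →
      ∀ i i' : ℕ, i < L → i' < L → i ≠ i' →
        0.4 * (L : ℝ) ^ (n + j - 1) ≤ ((Kmax (j - 1) (u * L + i)).ncard : ℝ) →
        0.4 * (L : ℝ) ^ (n + j - 1) ≤ ((Kmax (j - 1) (u * L + i')).ncard : ℝ) →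
        ∃ x ∈ Kmax (j - 1) (u * L + i), ∃ y ∈ Kmax (j - 1) (u * L + i'), G.Adj x y) :
    ∃ x ∈ hblock L n k 0,
      (1 - (L : ℝ) ^ (-(k : ℤ))) * θ * (L : ℝ) ^ (n + k) ≤
        ((clusterIn G (hblock L n k 0) x).ncard : ℝ) :=
  stmt_19_general L n k hL θ hθL G Kmax hKcluster hKmaximal hgood hnice
end
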